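/- arXiv:0712.0608 — 10 statements merged into one kernel-verified Lean document; each statement's English description precedes it below -/
import Mathlib

section
/- Let β > 0, α ∈ (0,1), and ω > 0 be real numbers. Then ω·(α − 2) + √(4βα + ω²α²) < 2·√(βα). -/
/-- For `β > 0`, `α ∈ (0,1)` and `ω > 0` one has
`ω·(α − 2) + √(4βα + ω²α²) < 2·√(βα)`. -/
theorem speed_bound_inequality (β α ω : ℝ) (hβ : 0 < β) (hα : α ∈ Set.Ioo (0 : ℝ) 1)
    (hω : 0 < ω) :
    ω * (α - 2) + Real.sqrt (4 * β * α + ω ^ 2 * α ^ 2) < 2 * Real.sqrt (β * α) := by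
  obtain ⟨hα0, hα1⟩ := hα
  set s := Real.sqrt (β * α) with hs
  have hs0 : 0 < s := Real.sqrt_pos.mpr (by positivity)
  have hs2 : s ^ 2 = β * α := Real.sq_sqrt (by positivity)
  have key : Real.sqrt (4 * β * α + ω ^ 2 * α ^ 2) < 2 * s + ω * α := by
    rw [show (2 * s + ω * α) = Real.sqrt ((2 * s + ω * α) ^ 2) from
      (Real.sqrt_sq (by positivity)).symm]
    apply Real.sqrt_lt_sqrt (by positivity)
    nlinarith [mul_pos (mul_pos hs0 hω) hα0, hs2]
  nlinarith [mul_pos (mul_pos hs0 hω) hα0]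
end

section
/- Let g, h, k > 0 and ω, c be real numbers satisfying the dispersion relation k·coth(kh)·(c + hω)² − ω·(c + hω) = g (the case s = 0 of the dispersion relation, corresponding to Stokes' condition at the bottom). Then c ≠ −hω; and if moreover c·ω > 0 (the speed and the vorticity have the same sign), then |c| < √(gh). -/
open Real

/-- `x cosh x - sinh x` vanishes at `0` and has derivative `x sinh x > 0`. -/
lemma Real.sinh_lt_mul_cosh {x : ℝ} (hx : 0 < x) : sinh x < x * cosh x := by
  have hmono : StrictMonoOn (fun y : ℝ => y * cosh y - sinh y) (Set.Ici 0) := by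
    refine strictMonoOn_of_deriv_pos (convex_Ici 0) (by fun_prop) fun y hy => ?_
    rw [interior_Ici] at hy
    have hderiv : HasDerivAt (fun y : ℝ => y * cosh y - sinh y)
        (1 * cosh y + y * sinh y - cosh y) y :=
      ((hasDerivAt_id' y).mul (hasDerivAt_cosh y)).sub (hasDerivAt_sinh y)
    rw [hderiv.deriv, one_mul, add_sub_cancel_left]
    exact mul_pos hy (sinh_pos_iff.2 hy)
  simpa using hmono Set.self_mem_Ici (Set.mem_Ici.2 hx.le) hx

lemma Real.one_lt_mul_cosh_div_sinh {x : ℝ} (hx : 0 < x) : 1 < x * (cosh x / sinh x) := by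
  rw [← mul_div_assoc, one_lt_div (sinh_pos_iff.2 hx)]
  exact sinh_lt_mul_cosh hx

/-- If `g, h, k > 0` and `k·coth(kh)·(c + hω)² − ω·(c + hω) = g`
(the dispersion relation with Stokes' condition `s = 0`), then `c ≠ −hω`, and if
moreover `c·ω > 0` then `|c| < √(gh)`. -/
theorem wave_speed_bound (g h k ω c : ℝ) (hg : 0 < g) (hh : 0 < h) (hk : 0 < k)
    (hdisp : k * (Real.cosh (k * h) / Real.sinh (k * h)) * (c + h * ω) ^ 2
      - ω * (c + h * ω) = g) :
    c ≠ -(h * ω) ∧ (c * ω > 0 → |c| < Real.sqrt (g * h)) := by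
  have hA : c + h * ω ≠ 0 := fun hA => hg.ne' (by rw [← hdisp, hA]; ring)
  refine ⟨fun hc => hA (by rw [hc]; ring), fun hcω => ?_⟩
  have hcoth := one_lt_mul_cosh_div_sinh (mul_pos hk hh)
  have hsq : c ^ 2 < g * h :=
    calc c ^ 2 < c ^ 2 + h * (c * ω) := lt_add_of_pos_right _ (mul_pos hh hcω)
      _ = 1 * (c + h * ω) ^ 2 - h * ω * (c + h * ω) := by ring
      _ < k * h * (cosh (k * h) / sinh (k * h)) * (c + h * ω) ^ 2 - h * ω * (c + h * ω) := by
        gcongr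
      _ = g * h := by rw [← hdisp]; ring
  rw [lt_sqrt (abs_nonneg c), sq_abs]
  exact hsq
end

section
/- Let A, k, f > 0 and ω ∈ ℝ. If (X, Y) : ℝ → ℝ² is a differentiable solution of the system Ẋ = A·k·cos X·cosh Y − ω·Y − f, Ẏ = A·k·sin X·sinh Y, then the function t ↦ H(X(t), Y(t)), where H(X,Y) = A·k·cos X·sinh Y − (ω/2)·Y² − f·Y, is constant. -/
/-! Along a solution, `d/dt H(X, Y) = H_X Ẋ + H_Y Ẏ`, and the system is Hamilton's
`Ẋ = ∂H/∂Y`, `Ẏ = -∂H/∂X`, so the two terms cancel. -/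

open Real ContinuousLinearMap

theorem hamiltonian_comp_flow_eq {H Hx Hy : ℝ × ℝ → ℝ}
    (hH : ∀ p, HasFDerivAt H (Hx p • fst ℝ ℝ ℝ + Hy p • snd ℝ ℝ ℝ) p) {X Y : ℝ → ℝ}
    (hX : ∀ t, HasDerivAt X (Hy (X t, Y t)) t) (hY : ∀ t, HasDerivAt Y (-Hx (X t, Y t)) t)
    (t₁ t₂ : ℝ) : H (X t₁, Y t₁) = H (X t₂, Y t₂) := by
  have hderiv : ∀ t, HasDerivAt (fun t => H (X t, Y t)) 0 t := fun t => by
    refine ((hH (X t, Y t)).comp_hasDerivAt t ((hX t).prodMk (hY t))).congr_deriv ?_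
    simp only [add_apply, smul_apply, coe_fst', coe_snd', smul_eq_mul]
    ring
  exact is_const_of_deriv_eq_zero (fun t => (hderiv t).differentiableAt)
    (fun t => (hderiv t).deriv) t₁ t₂

noncomputable def waveHamiltonian (A k f ω : ℝ) (p : ℝ × ℝ) : ℝ :=
  A * k * cos p.1 * sinh p.2 - ω / 2 * p.2 ^ 2 - f * p.2

theorem hasFDerivAt_waveHamiltonian (A k f ω : ℝ) (p : ℝ × ℝ) :
    HasFDerivAt (waveHamiltonian A k f ω)
      ((-(A * k * sin p.1 * sinh p.2)) • fst ℝ ℝ ℝ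
        + (A * k * cos p.1 * cosh p.2 - ω * p.2 - f) • snd ℝ ℝ ℝ) p := by
  have hfst : HasFDerivAt Prod.fst (fst ℝ ℝ ℝ) p := hasFDerivAt_fst
  have hsnd : HasFDerivAt Prod.snd (snd ℝ ℝ ℝ) p := hasFDerivAt_snd
  refine ((((hfst.cos.const_mul (A * k)).mul hsnd.sinh).sub
    ((hsnd.pow 2).const_mul (ω / 2))).sub (hsnd.const_mul f)).congr_fderiv ?_
  ext <;>
    simp only [comp_apply, add_apply, sub_apply, smul_apply, coe_fst', coe_snd',
      inl_apply, inr_apply, smul_eq_mul, nsmul_eq_mul, Nat.cast_ofNat] <;>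
    ring

theorem hamiltonian_conserved_general (A k f ω : ℝ)
    (X Y : ℝ → ℝ) (hX : Differentiable ℝ X) (hY : Differentiable ℝ Y)
    (hX' : ∀ t, deriv X t = A * k * Real.cos (X t) * Real.cosh (Y t) - ω * Y t - f)
    (hY' : ∀ t, deriv Y t = A * k * Real.sin (X t) * Real.sinh (Y t)) :
    ∀ t₁ t₂ : ℝ,
      A * k * Real.cos (X t₁) * Real.sinh (Y t₁) - ω / 2 * (Y t₁) ^ 2 - f * Y t₁ =
      A * k * Real.cos (X t₂) * Real.sinh (Y t₂) - ω / 2 * (Y t₂) ^ 2 - f * Y t₂ :=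
  hamiltonian_comp_flow_eq (hasFDerivAt_waveHamiltonian A k f ω)
    (fun t => hX' t ▸ (hX t).hasDerivAt)
    (fun t => by simpa only [hY' t, neg_neg] using (hY t).hasDerivAt)

/-- `H(X,Y) = Ak·cos X·sinh Y − ½ωY² − fY` is a conserved quantity
(Hamiltonian) for the system `Ẋ = Ak·cos X·cosh Y − ωY − f`,
`Ẏ = Ak·sin X·sinh Y`. -/
theorem hamiltonian_conserved (A k f ω : ℝ) (hA : 0 < A) (hk : 0 < k) (hf : 0 < f)
    (X Y : ℝ → ℝ) (hX : Differentiable ℝ X) (hY : Differentiable ℝ Y)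
    (hX' : ∀ t, deriv X t = A * k * Real.cos (X t) * Real.cosh (Y t) - ω * Y t - f)
    (hY' : ∀ t, deriv Y t = A * k * Real.sin (X t) * Real.sinh (Y t)) :
    ∀ t₁ t₂ : ℝ,
      A * k * Real.cos (X t₁) * Real.sinh (Y t₁) - ω / 2 * (Y t₁) ^ 2 - f * Y t₁ =
      A * k * Real.cos (X t₂) * Real.sinh (Y t₂) - ω / 2 * (Y t₂) ^ 2 - f * Y t₂ :=
  hamiltonian_conserved_general A k f ω X Y hX hY hX' hY'
end

section
/- Let A, k, f > 0 with A·k < f, and let ω ≥ 0. Then the system of equations A·k·cos X·cosh Y − ω·Y − f = 0 and A·k·sin X·sinh Y = 0 has exactly one solution (X, Y) in the region [0, π] × [0, ∞), namely (0, Y₀), where Y₀ is the unique positive solution of A·k·cosh Y₀ = ω·Y₀ + f. -/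
/-!
The function `g Y = Ak cosh Y - ωY - f` is strictly convex, negative at `0` (as `Ak < f`) and
tends to `+∞`; hence it has exactly one zero on `(0, ∞)`, since a strictly convex function lies
strictly below its chords. At a critical point `Y = 0` is impossible because `Ak cos X < f`, so
`sinh Y > 0` forces `sin X = 0`, i.e. `X ∈ {0, π}`; at `X = π` the first equation has a negative
left-hand side when `ω ≥ 0`.
-/

open Real Set Filter

theorem StrictConvexOn.eq_of_apply_eq_zero {𝕜 : Type*} [Field 𝕜] [LinearOrder 𝕜]
    [IsStrictOrderedRing 𝕜] {g : 𝕜 → 𝕜} {a y₁ y₂ : 𝕜} (hg : StrictConvexOn 𝕜 (Ici a) g)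
    (ha : g a ≤ 0) (h₁ : a < y₁) (h₂ : a < y₂) (e₁ : g y₁ = 0) (e₂ : g y₂ = 0) : y₁ = y₂ := by
  wlog hlt : y₁ < y₂ generalizing y₁ y₂
  · rcases (not_lt.1 hlt).lt_or_eq with h | h
    · exact (this h₂ h₁ e₂ e₁ h).symm
    · exact h.symm
  have := hg.lt_on_openSegment self_mem_Ici h₂.le h₂.ne (Ioo_subset_openSegment ⟨h₁, hlt⟩)
  rw [e₁, e₂, max_eq_right ha] at this
  exact this.false.elim

theorem StrictConvexOn.existsUnique_zero_Ioi {g : ℝ → ℝ} {a : ℝ}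
    (hg : StrictConvexOn ℝ (Ici a) g) (hcont : ContinuousOn g (Ici a)) (ha : g a < 0)
    (htop : Tendsto g atTop atTop) : ∃! y, a < y ∧ g y = 0 := by
  obtain ⟨y, hy, hy0⟩ := intermediate_value_Ioi hcont htop ha
  exact ⟨y, ⟨hy, hy0⟩, fun z hz => hg.eq_of_apply_eq_zero ha.le hz.1 hy hz.2 hy0⟩

theorem strictConvexOn_mul_cosh_sub_mul_sub {c : ℝ} (hc : 0 < c) (ω f : ℝ) :
    StrictConvexOn ℝ univ (fun y => c * cosh y - ω * y - f) := by
  refine StrictMono.strictConvexOn_univ_of_deriv (by fun_prop) ?_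
  have hderiv : deriv (fun y => c * cosh y - ω * y - f) = fun y => c * sinh y - ω := by
    ext y
    simpa using
      (((hasDerivAt_cosh y).const_mul c).sub ((hasDerivAt_id y).const_mul ω)).sub_const f |>.deriv
  rw [hderiv]
  exact fun x y hxy => by simpa using mul_lt_mul_of_pos_left (sinh_strictMono hxy) hc

theorem tendsto_mul_cosh_sub_mul_sub_atTop {c : ℝ} (hc : 0 < c) (ω f : ℝ) :
    Tendsto (fun y => c * cosh y - ω * y - f) atTop atTop := by
  have h : Tendsto (fun y => y * (c / 2 * (exp y / y ^ 1) - ω) - f) atTop atTop :=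
    tendsto_atTop_add_const_right _ (-f) <| tendsto_id.atTop_mul_atTop₀ <|
      tendsto_atTop_add_const_right _ _ <|
        (tendsto_exp_div_pow_atTop 1).const_mul_atTop (by positivity)
  refine tendsto_atTop_mono' _ ?_ h
  filter_upwards [eventually_gt_atTop 0] with y hy
  have hcosh : exp y / 2 ≤ cosh y := by rw [cosh_eq]; linarith [exp_pos (-y)]
  field_simp
  nlinarith

theorem existsUnique_pos_mul_cosh_eq {c f : ℝ} (hc : 0 < c) (hcf : c < f) (ω : ℝ) :
    ∃! y, 0 < y ∧ c * cosh y = ω * y + f := by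
  have h := (strictConvexOn_mul_cosh_sub_mul_sub hc ω f).subset (subset_univ _) (convex_Ici 0)
    |>.existsUnique_zero_Ioi (by fun_prop) (by simpa using hcf)
      (tendsto_mul_cosh_sub_mul_sub_atTop hc ω f)
  refine (existsUnique_congr fun y => ?_).1 h
  rw [sub_sub, sub_eq_zero]

theorem Real.eq_zero_or_eq_pi_of_sin_eq_zero {x : ℝ} (hx : x ∈ Icc 0 π) (h : sin x = 0) :
    x = 0 ∨ x = π := by
  rcases hx.1.eq_or_lt with rfl | h0
  · exact .inl rfl
  rcases hx.2.eq_or_lt with rfl | hπ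
  · exact .inr rfl
  exact absurd h (sin_pos_of_pos_of_lt_pi h0 hπ).ne'

theorem pos_of_mul_cos_mul_cosh_sub_eq_zero {c f ω X Y : ℝ} (hc : 0 ≤ c) (hcf : c < f)
    (hY : 0 ≤ Y) (h : c * cos X * cosh Y - ω * Y - f = 0) : 0 < Y := by
  refine hY.lt_of_ne fun hY0 => ?_
  subst hY0
  rw [cosh_zero, mul_one, mul_zero, sub_zero] at h
  nlinarith [cos_le_one X]

theorem mul_cos_pi_mul_cosh_sub_neg {c f ω Y : ℝ} (hc : 0 ≤ c) (hf : 0 < f) (hω : 0 ≤ ω)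
    (hY : 0 ≤ Y) : c * cos π * cosh Y - ω * Y - f < 0 := by
  rw [cos_pi]
  nlinarith [cosh_pos Y, mul_nonneg hω hY]

theorem unique_critical_point_general (A k f ω : ℝ) (hA : 0 < A) (hk : 0 < k)
    (hAk : A * k < f) (hω : 0 ≤ ω) :
    (∃! Y₀ : ℝ, 0 < Y₀ ∧ A * k * Real.cosh Y₀ = ω * Y₀ + f) ∧
    (∀ X Y : ℝ,
      (X ∈ Set.Icc 0 π ∧ 0 ≤ Y ∧
        A * k * Real.cos X * Real.cosh Y - ω * Y - f = 0 ∧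
        A * k * Real.sin X * Real.sinh Y = 0) ↔
      (X = 0 ∧ 0 < Y ∧ A * k * Real.cosh Y = ω * Y + f)) := by
  have hc : 0 < A * k := mul_pos hA hk
  refine ⟨existsUnique_pos_mul_cosh_eq hc hAk ω, fun X Y => ⟨?_, ?_⟩⟩
  · rintro ⟨hX, hY, hcrit, hsin⟩
    have hYpos := pos_of_mul_cos_mul_cosh_sub_eq_zero hc.le hAk hY hcrit
    have hsinX : sin X = 0 := by
      simpa [hc.ne', (sinh_pos_iff.2 hYpos).ne'] using hsin
    obtain rfl | rfl := eq_zero_or_eq_pi_of_sin_eq_zero hX hsinX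
    · refine ⟨rfl, hYpos, ?_⟩
      rw [cos_zero, mul_one] at hcrit
      linarith
    · exact absurd hcrit (mul_cos_pi_mul_cosh_sub_neg hc.le (hc.trans hAk) hω hY).ne
  · rintro ⟨rfl, hY, h⟩
    refine ⟨⟨le_rfl, pi_pos.le⟩, hY.le, ?_, by simp⟩
    rw [cos_zero, mul_one, h]
    ring

/-- For `A, k, f > 0` with `Ak < f` and `ω ≥ 0`, the system
`Ak·cos X·cosh Y − ωY − f = 0`, `Ak·sin X·sinh Y = 0` has exactly one solution
in `[0, π] × [0, ∞)`, namely `(0, Y₀)` with `Y₀` the unique positive solution of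
`Ak·cosh Y₀ = ωY₀ + f`. -/
theorem unique_critical_point (A k f ω : ℝ) (hA : 0 < A) (hk : 0 < k) (hf : 0 < f)
    (hAk : A * k < f) (hω : 0 ≤ ω) :
    (∃! Y₀ : ℝ, 0 < Y₀ ∧ A * k * Real.cosh Y₀ = ω * Y₀ + f) ∧
    (∀ X Y : ℝ,
      (X ∈ Set.Icc 0 π ∧ 0 ≤ Y ∧
        A * k * Real.cos X * Real.cosh Y - ω * Y - f = 0 ∧
        A * k * Real.sin X * Real.sinh Y = 0) ↔
      (X = 0 ∧ 0 < Y ∧ A * k * Real.cosh Y = ω * Y + f)) :=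
  unique_critical_point_general A k f ω hA hk hAk hω
end

section
/- Let ω < 0 and A, k, f > 0, and suppose that (ω/(Ak))·arsinh(ω/(Ak)) − √(1 + (ω/(Ak))²) − f/(Ak) > 0. Then for every X ∈ (π/2, π] the function Y ↦ A·k·cos X·cosh Y − ω·Y − f has exactly two zeros 0 < Y₁(X) < Y₂(X) in (0, ∞); the function Y₁ is strictly increasing and the function Y₂ is strictly decreasing on (π/2, π); and as X → π/2 from the right, Y₁(X) → −f/ω and Y₂(X) → ∞. -/
/-!
For fixed `X ∈ (π/2, π]` put `c = A k cos X ∈ [-A k, 0)`. Then `Y ↦ Ẋ = c cosh Y - ωY - f` is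
strictly concave and tends to `-∞` on both sides, and it is positive at `Y₀ = -arsinh (ω/(Ak))`:
since `cos X ≥ -1`, its value there is at least the value for `X = π`, which is `A k E(A k) > 0`
(`Y₀` is where that function peaks). So it has exactly two zeros, which bound its positivity
interval, and both exceed `-f/ω` because `Ẋ < -ωY - f`.
As `X` increases, `Ẋ` decreases pointwise, so the positivity intervals shrink strictly: this is
the monotonicity of the branches. As `X → π/2⁺`, `Ẋ → -ωY - f`, which is positive exactly on
`(-f/ω, ∞)`; hence every `Y > -f/ω` eventually lies between the branches, which gives the limits.
-/

open Real Set Filter Topology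

section StrictConcave

variable {s : Set ℝ} {g : ℝ → ℝ} {a b y : ℝ}

theorem StrictConcaveOn.neg_of_notMem_Icc (hg : StrictConcaveOn ℝ s g) (ha : a ∈ s) (hb : b ∈ s)
    (hy : y ∈ s) (hab : a < b) (ha0 : g a = 0) (hb0 : g b = 0) (hy' : y ∉ Icc a b) : g y < 0 := by
  rcases not_and_or.1 hy' with hya | hby
  · have := hg.lt_on_openSegment hy hb (by linarith) (z := a)
      (by rw [openSegment_eq_Ioo (by linarith)]; exact ⟨by linarith, hab⟩)
    rwa [ha0, hb0, min_lt_iff, lt_self_iff_false, or_false] at this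
  · have := hg.lt_on_openSegment ha hy (by linarith) (z := b)
      (by rw [openSegment_eq_Ioo (by linarith)]; exact ⟨hab, by linarith⟩)
    rwa [ha0, hb0, min_lt_iff, lt_self_iff_false, false_or] at this

theorem StrictConcaveOn.pos_iff_mem_Ioo (hg : StrictConcaveOn ℝ s g) (ha : a ∈ s) (hb : b ∈ s)
    (hy : y ∈ s) (hab : a < b) (ha0 : g a = 0) (hb0 : g b = 0) : 0 < g y ↔ y ∈ Ioo a b := by
  refine ⟨fun hpos => ?_, fun hy' => ?_⟩
  · by_contra hy'
    rcases eq_or_ne y a with rfl | hya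
    · exact hpos.ne' ha0
    rcases eq_or_ne y b with rfl | hyb
    · exact hpos.ne' hb0
    have : y ∉ Icc a b := fun h => hy' ⟨lt_of_le_of_ne h.1 hya.symm, lt_of_le_of_ne h.2 hyb⟩
    exact (hg.neg_of_notMem_Icc ha hb hy hab ha0 hb0 this).not_gt hpos
  · have := hg.lt_on_openSegment ha hb hab.ne (by rwa [openSegment_eq_Ioo hab])
    rwa [ha0, hb0, min_self] at this

theorem StrictConcaveOn.eq_zero_iff (hg : StrictConcaveOn ℝ s g) (ha : a ∈ s) (hb : b ∈ s)
    (hy : y ∈ s) (hab : a < b) (ha0 : g a = 0) (hb0 : g b = 0) : g y = 0 ↔ y = a ∨ y = b := by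
  refine ⟨fun hy0 => ?_, by rintro (rfl | rfl) <;> assumption⟩
  by_contra! hne
  by_cases hmem : y ∈ Icc a b
  · have := (hg.pos_iff_mem_Ioo ha hb hy hab ha0 hb0).2
      ⟨lt_of_le_of_ne hmem.1 hne.1.symm, lt_of_le_of_ne hmem.2 hne.2⟩
    exact this.ne' hy0
  · exact (hg.neg_of_notMem_Icc ha hb hy hab ha0 hb0 hmem).ne hy0

end StrictConcave

section PositivityInterval

variable {α : Type*} {F : α → ℝ → ℝ} {Y₁ Y₂ : α → ℝ}

theorem strictMonoOn_and_strictAntiOn_of_pos_iff_mem_Ioo [Preorder α] {S : Set α}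
    (hF : ∀ y, StrictAntiOn (F · y) S)
    (hpos : ∀ X ∈ S, ∀ y, 0 < F X y ↔ y ∈ Ioo (Y₁ X) (Y₂ X))
    (h₁ : ∀ X ∈ S, F X (Y₁ X) = 0) (h₂ : ∀ X ∈ S, F X (Y₂ X) = 0) :
    StrictMonoOn Y₁ S ∧ StrictAntiOn Y₂ S := by
  have hshrink : ∀ X ∈ S, ∀ X' ∈ S, X < X' → ∀ y, F X' y = 0 → y ∈ Ioo (Y₁ X) (Y₂ X) :=
    fun X hX X' hX' hlt y hy => (hpos X hX y).1 (hy ▸ hF y hX hX' hlt)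
  exact ⟨fun X hX X' hX' hlt => (hshrink X hX X' hX' hlt _ (h₁ X' hX')).1,
    fun X hX X' hX' hlt => (hshrink X hX X' hX' hlt _ (h₂ X' hX')).2⟩

theorem tendsto_nhds_and_tendsto_atTop_of_eventually_mem_Ioo {l : Filter α} {L : ℝ}
    (hL : ∀ᶠ X in l, L ≤ Y₁ X) (h : ∀ y, L < y → ∀ᶠ X in l, y ∈ Ioo (Y₁ X) (Y₂ X)) :
    Tendsto Y₁ l (𝓝 L) ∧ Tendsto Y₂ l atTop := by
  refine ⟨tendsto_order.2 ⟨fun a ha => hL.mono fun X hX => ha.trans_le hX,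
    fun b hb => (h b hb).mono fun X hX => hX.1⟩, tendsto_atTop.2 fun b => ?_⟩
  filter_upwards [h (max b L + 1) (by linarith [le_max_right b L])] with X hX
  linarith [le_max_left b L, hX.2]

end PositivityInterval

/-- `Ẋ` on the vertical line through `X`, written with `c = A k cos X`. -/
noncomputable def xDot (c ω f y : ℝ) : ℝ := c * cosh y - ω * y - f

section XDot

variable {c ω f : ℝ}

theorem continuous_xDot (c ω f : ℝ) : Continuous (xDot c ω f) := by
  unfold xDot; fun_prop

theorem hasDerivAt_xDot (c ω f y : ℝ) : HasDerivAt (xDot c ω f) (c * sinh y - ω) y := by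
  have := ((hasDerivAt_cosh y).const_mul c).sub ((hasDerivAt_id y).const_mul ω)
  rw [mul_one] at this
  exact this.sub_const f

theorem xDot_neg (c ω f y : ℝ) : xDot c ω f (-y) = xDot c (-ω) f y := by
  simp only [xDot, cosh_neg]; ring

theorem xDot_lt_xDot {c c' : ℝ} (h : c < c') (ω f y : ℝ) : xDot c ω f y < xDot c' ω f y := by
  have := mul_lt_mul_of_pos_right h (cosh_pos y)
  unfold xDot; linarith

theorem strictConcaveOn_xDot (hc : c < 0) (ω f : ℝ) : StrictConcaveOn ℝ univ (xDot c ω f) := by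
  refine StrictAnti.strictConcaveOn_univ_of_deriv (continuous_xDot c ω f) ?_
  rw [show deriv (xDot c ω f) = fun y => c * sinh y - ω from
    funext fun y => (hasDerivAt_xDot c ω f y).deriv]
  intro y y' hy
  have := mul_lt_mul_of_neg_left (sinh_strictMono hy) hc
  simp only; linarith

theorem sq_div_four_le_cosh {y : ℝ} (hy : 0 ≤ y) : y ^ 2 / 4 ≤ cosh y := by
  rw [cosh_eq]
  nlinarith [quadratic_le_exp_of_nonneg hy, exp_pos (-y)]

theorem exists_gt_xDot_neg (hc : c < 0) (hf : 0 ≤ f) (s : ℝ) : ∃ y, s < y ∧ xDot c ω f y < 0 := by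
  have hq : 0 ≤ 4 * |ω| / -c := div_nonneg (by positivity) (neg_nonneg.2 hc.le)
  set y := max s 0 + 4 * |ω| / -c + 1 with hy_def
  have hy0 : 0 < y := by linarith [le_max_right s 0]
  have hslope : c * y / 4 + |ω| < 0 := by
    have : 4 * |ω| / -c < y := by linarith [le_max_right s 0]
    rw [div_lt_iff₀ (neg_pos.2 hc)] at this; linarith
  refine ⟨y, by linarith [le_max_left s 0], ?_⟩
  have hcosh := mul_le_mul_of_nonpos_left (sq_div_four_le_cosh hy0.le) hc.le
  have hω := mul_le_mul_of_nonneg_right (neg_le_abs ω) hy0.le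
  have := mul_neg_of_pos_of_neg hy0 hslope
  unfold xDot; nlinarith

theorem exists_xDot_eq_zero (hc : c < 0) (hf : 0 ≤ f) {s : ℝ} (hs : 0 < xDot c ω f s) :
    ∃ y₁ y₂, y₁ < y₂ ∧ xDot c ω f y₁ = 0 ∧ xDot c ω f y₂ = 0 := by
  obtain ⟨l, hl, hl0⟩ := exists_gt_xDot_neg (ω := -ω) hc hf (-s)
  obtain ⟨r, hr, hr0⟩ := exists_gt_xDot_neg (ω := ω) hc hf s
  rw [← xDot_neg] at hl0
  obtain ⟨y₁, hy₁, h₁⟩ := intermediate_value_Ioo (by linarith : -l ≤ s)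
    (continuous_xDot c ω f).continuousOn ⟨hl0, hs⟩
  obtain ⟨y₂, hy₂, h₂⟩ := intermediate_value_Ioo' hr.le
    (continuous_xDot c ω f).continuousOn ⟨hr0, hs⟩
  exact ⟨y₁, y₂, hy₁.2.trans hy₂.1, h₁, h₂⟩

theorem xDot_zero_pos_iff (hω : ω < 0) {y : ℝ} : 0 < xDot 0 ω f y ↔ -f / ω < y := by
  rw [div_lt_iff_of_neg hω]; unfold xDot; constructor <;> intro h <;> linarith

theorem neg_div_lt_of_xDot_eq_zero (hc : c < 0) (hω : ω < 0) {y : ℝ} (hy : xDot c ω f y = 0) :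
    -f / ω < y :=
  (xDot_zero_pos_iff hω).1 (hy ▸ xDot_lt_xDot hc ω f y)

theorem xDot_neg_arsinh_pos {a : ℝ} (ha : 0 < a) (hc : -a ≤ c)
    (hE : 0 < ω / a * arsinh (ω / a) - Real.sqrt (1 + (ω / a) ^ 2) - f / a) :
    0 < xDot c ω f (-arsinh (ω / a)) := by
  have hpeak : xDot (-a) ω f (-arsinh (ω / a))
      = a * (ω / a * arsinh (ω / a) - Real.sqrt (1 + (ω / a) ^ 2) - f / a) := by
    simp only [xDot, cosh_neg, cosh_arsinh]; field_simp; ring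
  rcases hc.eq_or_lt with rfl | hlt
  · exact hpeak ▸ mul_pos ha hE
  · exact (hpeak ▸ mul_pos ha hE).trans (xDot_lt_xDot hlt ω f _)

theorem eventually_xDot_pos (a : ℝ) {y : ℝ} (h : 0 < xDot 0 ω f y) :
    ∀ᶠ X in 𝓝 (π / 2), 0 < xDot (a * cos X) ω f y := by
  have hcont : Continuous fun X => xDot (a * cos X) ω f y := by unfold xDot; fun_prop
  have := hcont.tendsto (π / 2)
  rw [cos_pi_div_two, mul_zero] at this
  exact this.eventually (lt_mem_nhds h)

theorem strictAntiOn_xDot_mul_cos {a : ℝ} (ha : 0 < a) (ω f y : ℝ) :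
    StrictAntiOn (fun X => xDot (a * cos X) ω f y) (Icc 0 π) :=
  fun _ hX _ hX' h => xDot_lt_xDot (mul_lt_mul_of_pos_left (strictAntiOn_cos hX hX' h) ha) ω f y

end XDot

theorem mul_cos_mem_Ico {a X : ℝ} (ha : 0 < a) (hX : X ∈ Ioc (π / 2) π) : a * cos X ∈ Ico (-a) 0 :=
  ⟨by nlinarith [neg_one_le_cos X], mul_neg_of_pos_of_neg ha
    (cos_neg_of_pi_div_two_lt_of_lt hX.1 (by linarith [pi_pos, hX.2]))⟩
open Real

/-- For `ω < 0`, `A, k, f > 0` with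
`(ω/(Ak))·arsinh(ω/(Ak)) − √(1+(ω/(Ak))²) − f/(Ak) > 0`, for every
`X ∈ (π/2, π]` the function `Y ↦ Ak·cos X·cosh Y − ωY − f` has exactly two
positive zeros `Y₁(X) < Y₂(X)`; `Y₁` is strictly increasing and `Y₂` strictly
decreasing on `(π/2, π)`; and `Y₁(X) → −f/ω`, `Y₂(X) → ∞` as `X → π/2⁺`. -/
theorem two_isocline_branches (A k f ω : ℝ) (hA : 0 < A) (hk : 0 < k) (hf : 0 < f)
    (hω : ω < 0)
    (hE : 0 < ω / (A * k) * Real.arsinh (ω / (A * k))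
      - Real.sqrt (1 + (ω / (A * k)) ^ 2) - f / (A * k)) :
    ∃ Y₁ Y₂ : ℝ → ℝ,
      (∀ X ∈ Set.Ioc (π / 2) π,
        0 < Y₁ X ∧ Y₁ X < Y₂ X ∧
        A * k * Real.cos X * Real.cosh (Y₁ X) - ω * Y₁ X - f = 0 ∧
        A * k * Real.cos X * Real.cosh (Y₂ X) - ω * Y₂ X - f = 0 ∧
        ∀ y : ℝ, 0 < y → A * k * Real.cos X * Real.cosh y - ω * y - f = 0 →
          y = Y₁ X ∨ y = Y₂ X) ∧
      StrictMonoOn Y₁ (Set.Ioo (π / 2) π) ∧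
      StrictAntiOn Y₂ (Set.Ioo (π / 2) π) ∧
      Filter.Tendsto Y₁ (nhdsWithin (π / 2) (Set.Ioi (π / 2))) (nhds (-f / ω)) ∧
      Filter.Tendsto Y₂ (nhdsWithin (π / 2) (Set.Ioi (π / 2))) Filter.atTop := by
  have hAk : 0 < A * k := mul_pos hA hk
  have hcoef := fun X (hX : X ∈ Ioc (π / 2) π) => mul_cos_mem_Ico hAk hX
  choose! Y₁ Y₂ hlt h₁ h₂ using fun X hX =>
    exists_xDot_eq_zero (hcoef X hX).2 hf.le (xDot_neg_arsinh_pos hAk (hcoef X hX).1 hE)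
  have hconc := fun X hX => strictConcaveOn_xDot (hcoef X hX).2 ω f
  have hpos : ∀ X ∈ Ioc (π / 2) π, ∀ y, 0 < xDot (A * k * cos X) ω f y ↔ y ∈ Ioo (Y₁ X) (Y₂ X) :=
    fun X hX y => (hconc X hX).pos_iff_mem_Ioo trivial trivial trivial (hlt X hX) (h₁ X hX) (h₂ X hX)
  have hlow := fun X hX => neg_div_lt_of_xDot_eq_zero (hcoef X hX).2 hω (h₁ X hX)
  have hnear : ∀ᶠ X in 𝓝[>] (π / 2), X ∈ Ioc (π / 2) π := Ioc_mem_nhdsGT (by linarith [pi_pos])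
  obtain ⟨hmono, hanti⟩ := strictMonoOn_and_strictAntiOn_of_pos_iff_mem_Ioo
    (fun y => (strictAntiOn_xDot_mul_cos hAk ω f y).mono (Ioo_subset_Icc_self.trans
      (Icc_subset_Icc_left (by linarith [pi_pos]))))
    (fun X hX => hpos X (Ioo_subset_Ioc_self hX)) (fun X hX => h₁ X (Ioo_subset_Ioc_self hX))
    (fun X hX => h₂ X (Ioo_subset_Ioc_self hX))
  obtain ⟨hlim₁, hlim₂⟩ := tendsto_nhds_and_tendsto_atTop_of_eventually_mem_Ioo
    (hnear.mono fun X hX => (hlow X hX).le) fun y hy => by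
      filter_upwards [hnear, nhdsWithin_le_nhds
        (eventually_xDot_pos (A * k) ((xDot_zero_pos_iff hω).2 hy))] with X hX hXy
      exact (hpos X hX y).1 hXy
  refine ⟨Y₁, Y₂, fun X hX => ⟨?_, hlt X hX, h₁ X hX, h₂ X hX, fun y _ hy => ?_⟩,
    hmono, hanti, hlim₁, hlim₂⟩
  · exact (div_pos_of_neg_of_neg (neg_neg_of_pos hf) hω).trans (hlow X hX)
  · exact ((hconc X hX).eq_zero_iff trivial trivial trivial (hlt X hX) (h₁ X hX) (h₂ X hX)).1 hy
end

section
/- Let ω < 0 and f > 0, and for α > 0 set E(α) := (ω/α)·arsinh(ω/α) − √(1 + (ω/α)²) − f/α. Then E(α) > 0 for all sufficiently small α > 0, and E(α) < 0 for all sufficiently large α > 0. -/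
/-- For `ω < 0` and `f > 0`, the quantity
`E(α) = (ω/α)·arsinh(ω/α) − √(1 + (ω/α)²) − f/α` is positive for all
sufficiently small `α > 0` and negative for all sufficiently large `α`. -/
theorem E_sign (ω f : ℝ) (hω : ω < 0) (hf : 0 < f) :
    (∃ α₀ > (0 : ℝ), ∀ α : ℝ, 0 < α → α < α₀ →
      0 < ω / α * Real.arsinh (ω / α) - Real.sqrt (1 + (ω / α) ^ 2) - f / α) ∧
    (∃ α₁ : ℝ, ∀ α : ℝ, α₁ < α →
      ω / α * Real.arsinh (ω / α) - Real.sqrt (1 + (ω / α) ^ 2) - f / α < 0) := by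
  have hω' : 0 < -ω := by linarith
  set c : ℝ := f / (-ω) with hc
  have hc0 : 0 < c := div_pos hf hω'
  have hM : (0:ℝ) < max 2 (Real.exp (2 + c)) := lt_of_lt_of_le two_pos (le_max_left _ _)
  constructor
  · refine ⟨-ω / max 2 (Real.exp (2 + c)), div_pos hω' hM, fun α hα hαlt => ?_⟩
    set s : ℝ := -ω / α with hs
    have hs0 : 0 < s := div_pos hω' hα
    have hsM : max 2 (Real.exp (2 + c)) < s := by
      rw [hs, lt_div_iff₀ hα]
      calc max 2 (Real.exp (2 + c)) * α
          < max 2 (Real.exp (2 + c)) * (-ω / max 2 (Real.exp (2 + c))) :=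
            by exact mul_lt_mul_of_pos_left hαlt hM
        _ = -ω := by field_simp
    have hs2 : 2 < s := lt_of_le_of_lt (le_max_left _ _) hsM
    have hse : Real.exp (2 + c) < s := lt_of_le_of_lt (le_max_right _ _) hsM
    have hlog : 2 + c < Real.log s := by
      rw [← Real.log_exp (2 + c)]
      exact Real.log_lt_log (Real.exp_pos _) hse
    have harsinh : Real.log s ≤ Real.arsinh s := by
      rw [Real.arsinh]
      apply Real.log_le_log hs0
      nlinarith [Real.sqrt_nonneg (1 + s ^ 2)]
    have hsqrt : Real.sqrt (1 + s ^ 2) ≤ 1 + s := by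
      rw [show (1:ℝ) + s = Real.sqrt ((1 + s) ^ 2) from (Real.sqrt_sq (by linarith)).symm]
      exact Real.sqrt_le_sqrt (by nlinarith)
    have hωα : ω / α = -s := by rw [hs]; field_simp
    have hfα : f / α = c * s := by
      rw [hs, hc, div_mul_div_comm, mul_comm (-ω) α, mul_div_mul_right _ _ (ne_of_gt hω')]
    rw [hωα, Real.arsinh_neg, hfα]
    have h1 : s * (2 + c) < s * Real.log s := mul_lt_mul_of_pos_left hlog hs0
    have h2 : s * Real.log s ≤ s * Real.arsinh s := mul_le_mul_of_nonneg_left harsinh hs0.le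
    have : Real.sqrt (1 + (-s) ^ 2) ≤ 1 + s := by rw [neg_pow]; simpa using hsqrt
    nlinarith
  · refine ⟨-ω, fun α hαlt => ?_⟩
    have hα : 0 < α := lt_trans hω' hαlt
    set s : ℝ := -ω / α with hs
    have hs0 : 0 < s := div_pos hω' hα
    have hs1 : s < 1 := (div_lt_one hα).mpr hαlt
    have harsinh : Real.arsinh s ≤ s := by
      have := Real.self_lt_sinh_iff.mpr hs0
      calc Real.arsinh s ≤ Real.arsinh (Real.sinh s) :=
            Real.arsinh_le_arsinh.mpr this.le
        _ = s := Real.arsinh_sinh s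
    have hsqrt : (1:ℝ) ≤ Real.sqrt (1 + s ^ 2) := by
      rw [Real.one_le_sqrt]; nlinarith
    have hωα : ω / α = -s := by rw [hs]; field_simp
    have hfα : 0 < f / α := div_pos hf hα
    rw [hωα, Real.arsinh_neg]
    have h1 : s * Real.arsinh s ≤ s * s := mul_le_mul_of_nonneg_left harsinh hs0.le
    have : (1:ℝ) ≤ Real.sqrt (1 + (-s) ^ 2) := by rw [neg_pow]; simpa using hsqrt
    nlinarith
end

section
/- Let ω < 0, A, k, f > 0, δ > 0, and Y* > 0 satisfy −ω·Y* > 1 + f + δ and A·k·cosh(Y* + δ) < δ/π. Then for every (X, Y) ∈ [0, π] × [Y*, Y* + δ]: the quantity A·k·cos X·cosh Y − ω·Y − f is strictly greater than 1, and 0 ≤ (A·k·sin X·sinh Y)/(A·k·cos X·cosh Y − ω·Y − f) < δ/π. -/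
open Real

/-- For `ω < 0`, `A, k, f > 0`, `δ > 0` and `Y* > 0` with
`−ω·Y* > 1 + f + δ` and `Ak·cosh(Y* + δ) < δ/π`, in the strip
`[0,π] × [Y*, Y*+δ]` the denominator `Ak·cos X·cosh Y − ωY − f` exceeds `1`
and the trajectory slope lies in `[0, δ/π)`. -/
theorem slope_estimate_strip (A k f ω δ Ystar : ℝ) (hω : ω < 0)
    (hA : 0 < A) (hk : 0 < k) (hf : 0 < f) (hδ : 0 < δ) (hY : 0 < Ystar)
    (h1 : 1 + f + δ < -ω * Ystar) (h2 : A * k * Real.cosh (Ystar + δ) < δ / π) :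
    ∀ X ∈ Set.Icc (0 : ℝ) π, ∀ Y ∈ Set.Icc Ystar (Ystar + δ),
      1 < A * k * Real.cos X * Real.cosh Y - ω * Y - f ∧
      0 ≤ A * k * Real.sin X * Real.sinh Y /
        (A * k * Real.cos X * Real.cosh Y - ω * Y - f) ∧
      A * k * Real.sin X * Real.sinh Y /
        (A * k * Real.cos X * Real.cosh Y - ω * Y - f) < δ / π := by
  intro X hX Y hY'
  obtain ⟨hX0, hXπ⟩ := hX
  obtain ⟨hY1, hY2⟩ := hY'
  have hAk : 0 < A * k := mul_pos hA hk
  have hcoshY : Real.cosh Y ≤ Real.cosh (Ystar + δ) :=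
    Real.cosh_le_cosh.2 (by
      rw [abs_of_pos (lt_of_lt_of_le hY hY1), abs_of_pos (by linarith)]
      exact hY2)
  have hcosh_pos : (0:ℝ) < Real.cosh Y := Real.cosh_pos Y
  have hAkcosh : A * k * Real.cosh Y ≤ A * k * Real.cosh (Ystar + δ) :=
    mul_le_mul_of_nonneg_left hcoshY hAk.le
  have hδπ : δ / π < δ := by
    rw [div_lt_iff₀ Real.pi_pos]
    nlinarith [Real.pi_gt_three]
  have hωY : 1 + f + δ < -ω * Y := lt_of_lt_of_le h1
    (mul_le_mul_of_nonneg_left hY1 (by linarith))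
  have hcos : -1 ≤ Real.cos X := Real.neg_one_le_cos X
  have hden : 1 < A * k * Real.cos X * Real.cosh Y - ω * Y - f := by
    have : -(A * k * Real.cosh Y) ≤ A * k * Real.cos X * Real.cosh Y := by
      nlinarith [mul_pos hAk hcosh_pos]
    nlinarith
  have hsin : 0 ≤ Real.sin X := Real.sin_nonneg_of_nonneg_of_le_pi hX0 hXπ
  have hsinh : 0 ≤ Real.sinh Y := (Real.sinh_pos_iff.2 (lt_of_lt_of_le hY hY1)).le
  have hnum : 0 ≤ A * k * Real.sin X * Real.sinh Y := by positivity
  refine ⟨hden, div_nonneg hnum (by linarith), ?_⟩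
  have hsin1 : Real.sin X ≤ 1 := Real.sin_le_one X
  have hsinhcosh : Real.sinh Y ≤ Real.cosh Y := (Real.sinh_lt_cosh Y).le
  have hnum_lt : A * k * Real.sin X * Real.sinh Y < δ / π := by
    have h3 : A * k * Real.sin X * Real.sinh Y ≤ A * k * Real.cosh Y := by
      nlinarith [mul_pos hAk hcosh_pos, mul_nonneg hAk.le hsinh]
    linarith
  calc A * k * Real.sin X * Real.sinh Y /
        (A * k * Real.cos X * Real.cosh Y - ω * Y - f)
      ≤ A * k * Real.sin X * Real.sinh Y := div_le_self hnum hden.le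
    _ < δ / π := hnum_lt
end

section
/- Let A, k, f > 0 with A·k < f, let τ > 0, and let X : [0, τ] → ℝ be continuously differentiable with X(0) = π, X(τ) = −π, and A·k·cos(X(t)) − f ≤ X′(t) < 0 for all t ∈ [0, τ]. Then τ > 2π/f. -/
/-!
Along the trajectory the phase moves at speed at most `f - Ak cos X`, so `t ↦ G (X t) + t` is
nondecreasing, where `G' = 1 / (f - Ak cos ·)`. Hence `τ` is at least
`∫_{-π}^{π} ds / (f - Ak cos s)`. Pairing `s` with `s - π` turns this integral into
`∫_0^π (1/(f + u) + 1/(f - u)) ds` with `u = Ak cos s`, and `1/(f + u) + 1/(f - u) = 2f/(f² - u²)`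
exceeds `2/f` wherever `u ≠ 0`.
-/

open Real Set

lemma inv_add_add_inv_sub_eq {f u : ℝ} (hu : |u| < f) :
    (f + u)⁻¹ + (f - u)⁻¹ = 2 * f / (f ^ 2 - u ^ 2) := by
  obtain ⟨hlo, hhi⟩ := abs_lt.1 hu
  rw [inv_add_inv (by linarith) (by linarith)]
  congr 1 <;> ring

lemma two_div_le_inv_add_add_inv_sub {f u : ℝ} (hu : |u| < f) :
    2 / f ≤ (f + u)⁻¹ + (f - u)⁻¹ := by
  have hf : 0 < f := (abs_nonneg u).trans_lt hu
  have hgap : 0 < f ^ 2 - u ^ 2 := by nlinarith [sq_abs u, abs_nonneg u]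
  rw [inv_add_add_inv_sub_eq hu, div_le_div_iff₀ hf hgap]
  nlinarith [sq_nonneg u]

lemma two_div_lt_inv_add_add_inv_sub {f u : ℝ} (hu : |u| < f) (hu0 : u ≠ 0) :
    2 / f < (f + u)⁻¹ + (f - u)⁻¹ := by
  have hf : 0 < f := (abs_nonneg u).trans_lt hu
  have hgap : 0 < f ^ 2 - u ^ 2 := by nlinarith [sq_abs u, abs_nonneg u]
  rw [inv_add_add_inv_sub_eq hu, div_lt_div_iff₀ hf hgap]
  nlinarith [sq_pos_of_ne_zero hu0]

lemma integral_neg_pi_pi_eq_integral_zero_pi_add {F : ℝ → ℝ} (hF : Continuous F) :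
    ∫ s in -π..π, F s = ∫ s in 0..π, (F (s - π) + F s) := by
  have hshift : ∫ s in -π..0, F s = ∫ s in 0..π, F (s - π) := by
    rw [intervalIntegral.integral_comp_sub_right, zero_sub, sub_self]
  rw [← intervalIntegral.integral_add_adjacent_intervals (b := 0)
      (hF.intervalIntegrable _ _) (hF.intervalIntegrable _ _), hshift]
  exact (intervalIntegral.integral_add
    ((hF.comp (continuous_sub_right π)).intervalIntegrable _ _) (hF.intervalIntegrable _ _)).symm

lemma abs_mul_cos_lt {f b : ℝ} (hb : |b| < f) (s : ℝ) : |b * cos s| < f := by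
  rw [abs_mul]
  nlinarith [abs_cos_le_one s, abs_nonneg b, abs_nonneg (cos s)]

lemma sub_mul_cos_pos {f b : ℝ} (hb : |b| < f) (s : ℝ) : 0 < f - b * cos s :=
  sub_pos.2 ((le_abs_self _).trans_lt (abs_mul_cos_lt hb s))

lemma continuous_inv_sub_mul_cos {f b : ℝ} (hb : |b| < f) :
    Continuous fun s => (f - b * cos s)⁻¹ :=
  (continuous_const.sub (continuous_const.mul continuous_cos)).inv₀
    fun s => (sub_mul_cos_pos hb s).ne'

theorem two_pi_div_lt_integral_inv_sub_mul_cos {f b : ℝ} (hb : |b| < f) (hb0 : b ≠ 0) :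
    2 * π / f < ∫ s in -π..π, (f - b * cos s)⁻¹ := by
  have hpair : ∀ s, (f - b * cos (s - π))⁻¹ = (f + b * cos s)⁻¹ := fun s => by
    rw [cos_sub_pi, mul_neg, sub_neg_eq_add]
  have hF := continuous_inv_sub_mul_cos hb
  rw [integral_neg_pi_pi_eq_integral_zero_pi_add hF]
  calc 2 * π / f = ∫ _ in (0 : ℝ)..π, 2 / f := by simp; ring
    _ < _ := by
      refine intervalIntegral.integral_lt_integral_of_continuousOn_of_le_of_exists_lt pi_pos
        continuousOn_const ((hF.comp (continuous_sub_right π)).add hF).continuousOn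
        (fun s _ => ?_) ⟨0, ⟨le_rfl, pi_pos.le⟩, ?_⟩
      · simpa only [hpair] using two_div_le_inv_add_add_inv_sub (abs_mul_cos_lt hb s)
      · simpa only [hpair] using
          two_div_lt_inv_add_add_inv_sub (abs_mul_cos_lt hb 0) (by simpa using hb0)

lemma integral_inv_le_sub_of_neg_le_deriv {g X X' : ℝ → ℝ} {a b : ℝ} (hg : Continuous g)
    (hg0 : ∀ x, 0 < g x) (hab : a ≤ b)
    (hderiv : ∀ t ∈ Icc a b, HasDerivWithinAt X (X' t) (Icc a b) t)
    (hbound : ∀ t ∈ Icc a b, -g (X t) ≤ X' t) :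
    ∫ s in X b..X a, (g s)⁻¹ ≤ b - a := by
  set G : ℝ → ℝ := fun u => ∫ s in (0 : ℝ)..u, (g s)⁻¹
  have hinv : Continuous fun s => (g s)⁻¹ := hg.inv₀ fun x => (hg0 x).ne'
  have hG : ∀ u, HasDerivAt G (g u)⁻¹ u := fun u =>
    (hinv.integral_hasStrictDerivAt 0 u).hasDerivAt
  have hmono : MonotoneOn (fun t => G (X t) + t) (Icc a b) := by
    refine monotoneOn_of_hasDerivWithinAt_nonneg (convex_Icc a b)
      (f' := fun t => (g (X t))⁻¹ * X' t + 1) ?_ (fun t ht => ?_) (fun t ht => ?_)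
    · exact ((continuous_iff_continuousAt.2 fun u => (hG u).continuousAt).comp_continuousOn
        fun t ht => (hderiv t ht).continuousWithinAt).add continuousOn_id
    · exact ((hG (X t)).comp_hasDerivWithinAt t
        ((hderiv t (interior_subset ht)).mono interior_subset)).add (hasDerivWithinAt_id t _)
    · have hgt := hg0 (X t)
      have hX' := hbound t (interior_subset ht)
      rw [← div_eq_inv_mul, div_add_one hgt.ne']
      exact div_nonneg (by linarith) hgt.le
  have hend := hmono ⟨le_rfl, hab⟩ ⟨hab, le_rfl⟩ hab
  rw [← intervalIntegral.integral_interval_sub_left (hinv.intervalIntegrable _ _)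
    (hinv.intervalIntegrable _ _)]
  change G (X a) - G (X b) ≤ b - a
  linarith

theorem forward_drift_time_general (A k f τ : ℝ) (hA : 0 < A) (hk : 0 < k)
    (hAk : A * k < f) (hτ : 0 < τ) (X X' : ℝ → ℝ)
    (hderiv : ∀ t ∈ Set.Icc 0 τ, HasDerivWithinAt X (X' t) (Set.Icc 0 τ) t)
    (h0 : X 0 = π) (h1 : X τ = -π)
    (hbound : ∀ t ∈ Set.Icc 0 τ, A * k * Real.cos (X t) - f ≤ X' t ∧ X' t < 0) :
    2 * π / f < τ := by
  have hb : |A * k| < f := by rwa [abs_of_pos (mul_pos hA hk)]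
  have htime : ∫ s in X τ..X 0, (f - A * k * cos s)⁻¹ ≤ τ - 0 :=
    integral_inv_le_sub_of_neg_le_deriv (continuous_const.sub (continuous_const.mul continuous_cos))
      (sub_mul_cos_pos hb) hτ.le hderiv fun t ht => by linarith [(hbound t ht).1]
  rw [h0, h1, sub_zero] at htime
  exact (two_pi_div_lt_integral_inv_sub_mul_cos hb (mul_pos hA hk).ne').trans_le htime

/-- If `X : [0,τ] → ℝ` is `C¹` with `X(0) = π`, `X(τ) = −π` and
`Ak·cos(X t) − f ≤ X′(t) < 0` on `[0,τ]` (where `0 < Ak < f`), then `τ > 2π/f`. -/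
theorem forward_drift_time (A k f τ : ℝ) (hA : 0 < A) (hk : 0 < k) (hf : 0 < f)
    (hAk : A * k < f) (hτ : 0 < τ) (X X' : ℝ → ℝ)
    (hderiv : ∀ t ∈ Set.Icc 0 τ, HasDerivWithinAt X (X' t) (Set.Icc 0 τ) t)
    (hcont : ContinuousOn X' (Set.Icc 0 τ))
    (h0 : X 0 = π) (h1 : X τ = -π)
    (hbound : ∀ t ∈ Set.Icc 0 τ, A * k * Real.cos (X t) - f ≤ X' t ∧ X' t < 0) :
    2 * π / f < τ :=
  forward_drift_time_general A k f τ hA hk hAk hτ X X' hderiv h0 h1 hbound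
end

section
/- Let A, k, f > 0, ω < 0, and define H(X, Y) = A·k·cos X·sinh Y − (ω/2)·Y² − f·Y. Suppose 0 < Y₁ < Y₂ are two distinct zeros of ψ(Y) = A·k·cosh Y + ω·Y + f. Then A·k·sinh Y₁ + ω < 0, and the Hessian matrix of H at (π, Y₁) is diagonal with entries ∂²H/∂X² = A·k·sinh Y₁ > 0 and ∂²H/∂Y² = −A·k·sinh Y₁ − ω > 0; in particular it is positive definite, so (π, Y₁) is a nondegenerate local minimum (a center) of H. -/
open Real

/-- Tangent line of `cosh` lies strictly below for `a < b`. -/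
lemma cosh_tangent_lt {a b : ℝ} (hab : a < b) :
    Real.cosh a + Real.sinh a * (b - a) < Real.cosh b := by
  have hmono : StrictMonoOn (fun t => Real.cosh t - Real.sinh a * t) (Set.Icc a b) := by
    apply strictMonoOn_of_deriv_pos (convex_Icc a b)
    · exact ((Real.continuous_cosh).sub (continuous_const.mul continuous_id)).continuousOn
    · intro x hx
      rw [interior_Icc] at hx
      have hd : HasDerivAt (fun t => Real.cosh t - Real.sinh a * t)
          (Real.sinh x - Real.sinh a * 1) x :=
        (Real.hasDerivAt_cosh x).sub ((hasDerivAt_id x).const_mul (Real.sinh a))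
      rw [hd.deriv]
      have : Real.sinh a < Real.sinh x := Real.sinh_lt_sinh.mpr hx.1
      linarith
  have := hmono (Set.left_mem_Icc.mpr hab.le) (Set.right_mem_Icc.mpr hab.le) hab
  simp only at this
  nlinarith

/-- `ψ(y) = c·cosh y + ω·y + f` is convex for `c ≥ 0`. -/
lemma psi_convexOn {c ω f : ℝ} (hc : 0 ≤ c) :
    ConvexOn ℝ Set.univ (fun y => c * Real.cosh y + ω * y + f) := by
  have hd1 : deriv (fun y => c * Real.cosh y + ω * y + f) = fun y => c * Real.sinh y + ω := by
    funext y
    have hd : HasDerivAt (fun y => c * Real.cosh y + ω * y + f)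
        (c * Real.sinh y + ω * 1) y :=
      (((Real.hasDerivAt_cosh y).const_mul c).add ((hasDerivAt_id y).const_mul ω)).add_const f
    rw [hd.deriv]; ring
  apply convexOn_of_deriv2_nonneg' convex_univ
  · exact (Differentiable.differentiableOn (by fun_prop))
  · rw [hd1]; exact (Differentiable.differentiableOn (by fun_prop))
  · intro x _
    have : deriv^[2] (fun y => c * Real.cosh y + ω * y + f) x = c * Real.cosh x := by
      simp only [Function.iterate_succ, Function.iterate_zero, Function.comp_apply, id_eq, hd1]
      have hd : HasDerivAt (fun y => c * Real.sinh y + ω) (c * Real.cosh x) x :=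
        ((Real.hasDerivAt_sinh x).const_mul c).add_const ω
      rw [hd.deriv]
    rw [this]
    positivity

/-- For `ω < 0`, at the lower zero `Y₁` of
`ψ(Y) = Ak·cosh Y + ωY + f` (with `0 < Y₁ < Y₂` the two zeros), one has
`Ak·sinh Y₁ + ω < 0`, and the Hessian of `H(X,Y) = Ak·cos X·sinh Y − ½ωY² − fY`
at `(π, Y₁)` is diagonal with positive entries `Ak·sinh Y₁` and
`−Ak·sinh Y₁ − ω`; in particular it is positive definite, so `(π, Y₁)` is a
nondegenerate local minimum (a center) of `H`. -/
theorem center_P1 (A k f ω Y₁ Y₂ : ℝ) (hA : 0 < A) (hk : 0 < k) (hf : 0 < f)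
    (hω : ω < 0) (hY₁ : 0 < Y₁) (hY₁₂ : Y₁ < Y₂)
    (hz₁ : A * k * Real.cosh Y₁ + ω * Y₁ + f = 0)
    (hz₂ : A * k * Real.cosh Y₂ + ω * Y₂ + f = 0)
    (H : ℝ → ℝ → ℝ)
    (hH : ∀ X Y, H X Y = A * k * Real.cos X * Real.sinh Y - ω / 2 * Y ^ 2 - f * Y) :
    A * k * Real.sinh Y₁ + ω < 0 ∧
    deriv (fun Y => deriv (fun X => H X Y) π) Y₁ = 0 ∧
    deriv (deriv (fun X => H X Y₁)) π = A * k * Real.sinh Y₁ ∧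
    0 < A * k * Real.sinh Y₁ ∧
    deriv (deriv (fun Y => H π Y)) Y₁ = -(A * k * Real.sinh Y₁) - ω ∧
    0 < -(A * k * Real.sinh Y₁) - ω ∧
    IsLocalMin (fun q : ℝ × ℝ => H q.1 q.2) (π, Y₁) := by
  set c := A * k with hc_def
  have hc : 0 < c := mul_pos hA hk
  have hsinh₁ : 0 < Real.sinh Y₁ := Real.sinh_pos_iff.mpr hY₁
  -- Part 1
  have h1 : c * Real.sinh Y₁ + ω < 0 := by
    have hkey := cosh_tangent_lt hY₁₂
    have hsub : c * (Real.cosh Y₂ - Real.cosh Y₁) + ω * (Y₂ - Y₁) = 0 := by linear_combination hz₂ - hz₁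
    have hd : 0 < Y₂ - Y₁ := by linarith
    nlinarith [mul_lt_mul_of_pos_left hkey hc]
  -- X-derivative of H(·, Y)
  have hdX : ∀ Y x, deriv (fun X => H X Y) x = -(c * Real.sin x * Real.sinh Y) := by
    intro Y x
    have heq : (fun X => H X Y) =
        fun X => c * Real.cos X * Real.sinh Y - ω / 2 * Y ^ 2 - f * Y :=
      funext fun X => hH X Y
    rw [heq]
    have hd : HasDerivAt (fun X => c * Real.cos X * Real.sinh Y - ω / 2 * Y ^ 2 - f * Y)
        (c * -Real.sin x * Real.sinh Y) x :=
      ((((Real.hasDerivAt_cos x).const_mul c).mul_const (Real.sinh Y)).sub_const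
        (ω / 2 * Y ^ 2)).sub_const (f * Y)
    rw [hd.deriv]; ring
  -- Part 2 : mixed partial vanishes
  have h2 : deriv (fun Y => deriv (fun X => H X Y) π) Y₁ = 0 := by
    have heq : (fun Y => deriv (fun X => H X Y) π) = fun _ : ℝ => (0 : ℝ) := by
      funext Y; rw [hdX Y π, Real.sin_pi]; ring
    rw [heq, deriv_const]
  -- Part 3 : ∂²H/∂X² at (π, Y₁)
  have h3 : deriv (deriv (fun X => H X Y₁)) π = c * Real.sinh Y₁ := by
    have heq : deriv (fun X => H X Y₁) = fun x => -(c * Real.sin x * Real.sinh Y₁) :=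
      funext fun x => hdX Y₁ x
    rw [heq]
    have hd : HasDerivAt (fun x => -(c * Real.sin x * Real.sinh Y₁))
        (-(c * Real.cos π * Real.sinh Y₁)) π :=
      (((Real.hasDerivAt_sin π).const_mul c).mul_const (Real.sinh Y₁)).neg
    rw [hd.deriv, Real.cos_pi]; ring
  -- Part 4
  have h4 : 0 < c * Real.sinh Y₁ := mul_pos hc hsinh₁
  -- Y-derivative of H(π, ·)
  have hdY : ∀ y, deriv (fun Y => H π Y) y = -(c * Real.cosh y + ω * y + f) := by
    intro y
    have heq : (fun Y => H π Y) =
        fun Y => c * Real.cos π * Real.sinh Y - ω / 2 * Y ^ 2 - f * Y :=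
      funext fun Y => hH π Y
    rw [heq]
    have hd : HasDerivAt (fun Y => c * Real.cos π * Real.sinh Y - ω / 2 * Y ^ 2 - f * Y)
        (c * Real.cos π * Real.cosh y - ω / 2 * (2 * y ^ 1) - f * 1) y := by
      exact (((Real.hasDerivAt_sinh y).const_mul (c * Real.cos π)).sub
        ((hasDerivAt_pow 2 y).const_mul (ω / 2))).sub ((hasDerivAt_id y).const_mul f)
    rw [hd.deriv, Real.cos_pi]; ring
  -- Part 5 : ∂²H/∂Y² at (π, Y₁)
  have h5 : deriv (deriv (fun Y => H π Y)) Y₁ = -(c * Real.sinh Y₁) - ω := by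
    have heq : deriv (fun Y => H π Y) = fun y => -(c * Real.cosh y + ω * y + f) :=
      funext fun y => hdY y
    rw [heq]
    have hd : HasDerivAt (fun y => -(c * Real.cosh y + ω * y + f))
        (-(c * Real.sinh Y₁ + ω * 1)) Y₁ :=
      ((((Real.hasDerivAt_cosh Y₁).const_mul c).add
        ((hasDerivAt_id Y₁).const_mul ω)).add_const f).neg
    rw [hd.deriv]; ring
  -- Part 6
  have h6 : 0 < -(c * Real.sinh Y₁) - ω := by linarith
  -- Part 7 : local minimum
  have hψconv : ConvexOn ℝ Set.univ (fun y => c * Real.cosh y + ω * y + f) :=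
    psi_convexOn hc.le
  -- ψ ≥ 0 on (0, Y₁)
  have hψ_nonneg : ∀ y ∈ Set.Ioo (0 : ℝ) Y₁, 0 ≤ c * Real.cosh y + ω * y + f := by
    intro y hy
    have hs := hψconv.slope_mono_adjacent (Set.mem_univ y) (Set.mem_univ Y₂) hy.2 hY₁₂
    rw [hz₁, hz₂] at hs
    simp only [sub_self, zero_div, zero_sub] at hs
    by_contra hneg
    push_neg at hneg
    have h1' : 0 < -(c * Real.cosh y + ω * y + f) / (Y₁ - y) :=
      div_pos (by linarith) (by linarith [hy.2])
    linarith
  -- ψ ≤ 0 on (Y₁, Y₂)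
  have hψ_nonpos : ∀ y ∈ Set.Ioo Y₁ Y₂, c * Real.cosh y + ω * y + f ≤ 0 := by
    intro y hy
    have hs := hψconv.slope_mono_adjacent (Set.mem_univ Y₁) (Set.mem_univ Y₂) hy.1 hy.2
    rw [hz₁, hz₂] at hs
    by_contra hpos
    push_neg at hpos
    have hl : 0 < (c * Real.cosh y + ω * y + f - 0) / (y - Y₁) :=
      div_pos (by linarith) (by linarith [hy.1])
    have hr : (0 - (c * Real.cosh y + ω * y + f)) / (Y₂ - y) < 0 :=
      div_neg_of_neg_of_pos (by linarith) (by linarith [hy.2])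
    linarith
  -- G := H π · is differentiable
  have hGdiff : Differentiable ℝ (fun Y => H π Y) := by
    have heq : (fun Y => H π Y) =
        fun Y => c * Real.cos π * Real.sinh Y - ω / 2 * Y ^ 2 - f * Y :=
      funext fun Y => hH π Y
    rw [heq]; fun_prop
  -- G is antitone on [0, Y₁]
  have hGanti : AntitoneOn (fun Y => H π Y) (Set.Icc 0 Y₁) := by
    apply antitoneOn_of_deriv_nonpos (convex_Icc 0 Y₁) hGdiff.continuous.continuousOn
      (hGdiff.differentiableOn)
    intro x hx
    rw [interior_Icc] at hx
    rw [hdY x]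
    have := hψ_nonneg x hx
    linarith
  -- G is monotone on [Y₁, Y₂]
  have hGmono : MonotoneOn (fun Y => H π Y) (Set.Icc Y₁ Y₂) := by
    apply monotoneOn_of_deriv_nonneg (convex_Icc Y₁ Y₂) hGdiff.continuous.continuousOn
      (hGdiff.differentiableOn)
    intro x hx
    rw [interior_Icc] at hx
    rw [hdY x]
    have := hψ_nonpos x hx
    linarith
  have hGmin : ∀ y ∈ Set.Ioo (0 : ℝ) Y₂, H π Y₁ ≤ H π y := by
    intro y hy
    rcases le_or_gt y Y₁ with hle | hlt
    · exact hGanti (Set.mem_Icc.mpr ⟨hy.1.le, hle⟩)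
        (Set.mem_Icc.mpr ⟨hY₁.le, le_refl Y₁⟩) hle
    · exact hGmono (Set.mem_Icc.mpr ⟨le_refl Y₁, hY₁₂.le⟩)
        (Set.mem_Icc.mpr ⟨hlt.le, hy.2.le⟩) hlt.le
  have hmin : IsLocalMin (fun q : ℝ × ℝ => H q.1 q.2) (π, Y₁) := by
    have hopen : IsOpen (Set.univ ×ˢ Set.Ioo (0 : ℝ) Y₂) := (isOpen_univ (X := ℝ)).prod isOpen_Ioo
    have hmem : (π, Y₁) ∈ (Set.univ ×ˢ Set.Ioo (0 : ℝ) Y₂ : Set (ℝ × ℝ)) :=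
      ⟨Set.mem_univ _, ⟨hY₁, hY₁₂⟩⟩
    refine Filter.eventually_of_mem (hopen.mem_nhds hmem) ?_
    rintro ⟨X, Y⟩ ⟨-, hY⟩
    simp only
    have hstep : H π Y ≤ H X Y := by
      rw [hH X Y, hH π Y]
      have hcos : -1 ≤ Real.cos X := Real.neg_one_le_cos X
      have hsY : 0 ≤ Real.sinh Y := (Real.sinh_pos_iff.mpr hY.1).le
      rw [Real.cos_pi]
      nlinarith [mul_nonneg (mul_nonneg hc.le (by linarith : (0:ℝ) ≤ Real.cos X + 1)) hsY]
    exact le_trans (hGmin Y hY) hstep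
  exact ⟨h1, h2, h3, h4, h5, h6, hmin⟩
end

section
/- Let A, k, f > 0, ω < 0, and define H(X, Y) = A·k·cos X·sinh Y − (ω/2)·Y² − f·Y. Suppose 0 < Y₁ < Y₂ are two distinct zeros of ψ(Y) = A·k·cosh Y + ω·Y + f. Then A·k·sinh Y₂ + ω > 0, and the Hessian matrix of H at (π, Y₂) is diagonal with entries ∂²H/∂X² = A·k·sinh Y₂ > 0 and ∂²H/∂Y² = −A·k·sinh Y₂ − ω < 0; in particular its determinant is negative, so (π, Y₂) is a saddle point of H. -/
/-!
`ψ` is strictly convex and vanishes at `Y₁ < Y₂`, so it is increasing at the larger zero: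
`ψ'(Y₂) = Ak sinh Y₂ + ω > 0`. On the line `X = π` one has `∂H/∂Y = -ψ`, hence
`∂²H/∂Y²(π, Y₂) = -ψ'(Y₂) < 0`, while `∂²H/∂X²(π, Y₂) = Ak sinh Y₂ > -ω > 0` and the mixed
partial vanishes because `∂H/∂X = -Ak sinh Y sin X` is zero on `X = π`.
-/

open Real Set

lemma StrictConvexOn.pos_of_hasDerivAt_of_eq {S : Set ℝ} {f : ℝ → ℝ} {x y f' : ℝ}
    (hfc : StrictConvexOn ℝ S f) (hx : x ∈ S) (hy : y ∈ S) (hxy : x < y) (hfxy : f x = f y)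
    (hf' : HasDerivAt f f' y) : 0 < f' := by
  simpa [slope, hfxy] using hfc.slope_lt_of_hasDerivAt hx hy hxy hf'

namespace SteadyWave

noncomputable def psi (c ω f Y : ℝ) : ℝ := c * cosh Y + ω * Y + f

noncomputable def hamiltonian (c ω f X Y : ℝ) : ℝ := c * cos X * sinh Y - ω / 2 * Y ^ 2 - f * Y

section

variable (c ω f : ℝ)

lemma hasDerivAt_psi (Y : ℝ) : HasDerivAt (psi c ω f) (c * sinh Y + ω) Y := by
  have h := (((hasDerivAt_cosh Y).const_mul c).add ((hasDerivAt_id Y).const_mul ω)).add_const f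
  exact h.congr_deriv (by ring)

lemma deriv_psi : deriv (psi c ω f) = fun Y => c * sinh Y + ω :=
  funext fun Y => (hasDerivAt_psi c ω f Y).deriv

lemma strictConvexOn_psi {c : ℝ} (hc : 0 < c) : StrictConvexOn ℝ univ (psi c ω f) := by
  refine StrictMono.strictConvexOn_univ_of_deriv ?_ ?_
  · unfold psi; fun_prop
  · rw [deriv_psi]
    exact (sinh_strictMono.const_mul hc).add_const ω

lemma hasDerivAt_hamiltonian_fst (X Y : ℝ) :
    HasDerivAt (fun X => hamiltonian c ω f X Y) (-(c * sinh Y * sin X)) X := by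
  have h := ((((hasDerivAt_cos X).const_mul c).mul_const (sinh Y)).sub_const
    (ω / 2 * Y ^ 2)).sub_const (f * Y)
  exact h.congr_deriv (by ring)

lemma hasDerivAt_hamiltonian_snd_pi (Y : ℝ) :
    HasDerivAt (fun Y => hamiltonian c ω f π Y) (-psi c ω f Y) Y := by
  have h := (((hasDerivAt_sinh Y).const_mul c).neg.sub
    ((hasDerivAt_pow 2 Y).const_mul (ω / 2))).sub ((hasDerivAt_id Y).const_mul f)
  have e : (fun Y => hamiltonian c ω f π Y) = fun Y => -(c * sinh Y) - ω / 2 * Y ^ 2 - f * Y := by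
    funext Y; simp [hamiltonian]
  rw [e]
  exact h.congr_deriv (by simp only [psi, Nat.cast_ofNat, Nat.add_one_sub_one, pow_one, mul_one]; ring)

lemma deriv_hamiltonian_fst (Y : ℝ) :
    deriv (fun X => hamiltonian c ω f X Y) = fun X => -(c * sinh Y * sin X) :=
  funext fun X => (hasDerivAt_hamiltonian_fst c ω f X Y).deriv

lemma deriv_hamiltonian_snd_pi :
    deriv (fun Y => hamiltonian c ω f π Y) = fun Y => -psi c ω f Y :=
  funext fun Y => (hasDerivAt_hamiltonian_snd_pi c ω f Y).deriv

lemma deriv_deriv_hamiltonian_fst (X Y : ℝ) :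
    deriv (deriv fun X => hamiltonian c ω f X Y) X = -(c * sinh Y * cos X) := by
  rw [deriv_hamiltonian_fst]
  exact (((hasDerivAt_sin X).const_mul (c * sinh Y)).neg).deriv

lemma deriv_deriv_hamiltonian_snd_pi (Y : ℝ) :
    deriv (deriv fun Y => hamiltonian c ω f π Y) Y = -(c * sinh Y + ω) := by
  rw [deriv_hamiltonian_snd_pi]
  exact (hasDerivAt_psi c ω f Y).neg.deriv

lemma deriv_deriv_hamiltonian_mixed_pi (Y : ℝ) :
    deriv (fun Y => deriv (fun X => hamiltonian c ω f X Y) π) Y = 0 := by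
  simp only [deriv_hamiltonian_fst, sin_pi, mul_zero, neg_zero, deriv_const']

end

end SteadyWave

open SteadyWave

theorem saddle_P2_general (A k f ω Y₁ Y₂ : ℝ) (hA : 0 < A) (hk : 0 < k)
    (hω : ω < 0) (hY₁₂ : Y₁ < Y₂)
    (hz₁ : A * k * Real.cosh Y₁ + ω * Y₁ + f = 0)
    (hz₂ : A * k * Real.cosh Y₂ + ω * Y₂ + f = 0)
    (H : ℝ → ℝ → ℝ)
    (hH : ∀ X Y, H X Y = A * k * Real.cos X * Real.sinh Y - ω / 2 * Y ^ 2 - f * Y) :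
    0 < A * k * Real.sinh Y₂ + ω ∧
    deriv (fun Y => deriv (fun X => H X Y) π) Y₂ = 0 ∧
    deriv (deriv (fun X => H X Y₂)) π = A * k * Real.sinh Y₂ ∧
    0 < A * k * Real.sinh Y₂ ∧
    deriv (deriv (fun Y => H π Y)) Y₂ = -(A * k * Real.sinh Y₂) - ω ∧
    -(A * k * Real.sinh Y₂) - ω < 0 ∧
    deriv (deriv (fun X => H X Y₂)) π * deriv (deriv (fun Y => H π Y)) Y₂ -
      (deriv (fun Y => deriv (fun X => H X Y) π) Y₂) ^ 2 < 0 := by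
  obtain rfl : H = hamiltonian (A * k) ω f := funext₂ hH
  have hψ' : 0 < A * k * sinh Y₂ + ω :=
    (strictConvexOn_psi ω f (mul_pos hA hk)).pos_of_hasDerivAt_of_eq (mem_univ _) (mem_univ _)
      hY₁₂ (hz₁.trans hz₂.symm) (hasDerivAt_psi _ ω f Y₂)
  have hXY := deriv_deriv_hamiltonian_mixed_pi (A * k) ω f Y₂
  have hXX : deriv (deriv fun X => hamiltonian (A * k) ω f X Y₂) π = A * k * sinh Y₂ := by
    rw [deriv_deriv_hamiltonian_fst, cos_pi]; ring
  have hYY := deriv_deriv_hamiltonian_snd_pi (A * k) ω f Y₂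
  have hsinh : 0 < A * k * sinh Y₂ := by linarith
  refine ⟨hψ', hXY, hXX, hsinh, by rw [hYY]; ring, by linarith, ?_⟩
  rw [hXY, hXX, hYY, zero_pow two_ne_zero, sub_zero]
  exact mul_neg_of_pos_of_neg hsinh (by linarith)

/-- For `ω < 0`, at the upper zero `Y₂` of
`ψ(Y) = Ak·cosh Y + ωY + f` (with `0 < Y₁ < Y₂` the two zeros), one has
`Ak·sinh Y₂ + ω > 0`, and the Hessian of `H(X,Y) = Ak·cos X·sinh Y − ½ωY² − fY`
at `(π, Y₂)` is diagonal with entries `Ak·sinh Y₂ > 0` and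
`−Ak·sinh Y₂ − ω < 0`; in particular its determinant is negative, so `(π, Y₂)`
is a saddle point of `H`. -/
theorem saddle_P2 (A k f ω Y₁ Y₂ : ℝ) (hA : 0 < A) (hk : 0 < k) (hf : 0 < f)
    (hω : ω < 0) (hY₁ : 0 < Y₁) (hY₁₂ : Y₁ < Y₂)
    (hz₁ : A * k * Real.cosh Y₁ + ω * Y₁ + f = 0)
    (hz₂ : A * k * Real.cosh Y₂ + ω * Y₂ + f = 0)
    (H : ℝ → ℝ → ℝ)
    (hH : ∀ X Y, H X Y = A * k * Real.cos X * Real.sinh Y - ω / 2 * Y ^ 2 - f * Y) :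
    0 < A * k * Real.sinh Y₂ + ω ∧
    deriv (fun Y => deriv (fun X => H X Y) π) Y₂ = 0 ∧
    deriv (deriv (fun X => H X Y₂)) π = A * k * Real.sinh Y₂ ∧
    0 < A * k * Real.sinh Y₂ ∧
    deriv (deriv (fun Y => H π Y)) Y₂ = -(A * k * Real.sinh Y₂) - ω ∧
    -(A * k * Real.sinh Y₂) - ω < 0 ∧
    deriv (deriv (fun X => H X Y₂)) π * deriv (deriv (fun Y => H π Y)) Y₂ -
      (deriv (fun Y => deriv (fun X => H X Y) π) Y₂) ^ 2 < 0 :=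
  saddle_P2_general A k f ω Y₁ Y₂ hA hk hω hY₁₂ hz₁ hz₂ H hH
end
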